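/- arXiv:2002.02201 — 3 statements merged into one kernel-verified Lean document; each statement's English description precedes it below -/
import Mathlib

section
/- (Range of the spectral parameter.) Let N be a positive integer and s ∈ (0,1) with 2s < N. Then: (i) for every α ∈ [0, (N−2s)/2) one has 0 < γ_α ≤ Λ_{N,s}, with γ_0 = Λ_{N,s}; and (ii) for every λ ∈ (0, Λ_{N,s}] there exists exactly one α ∈ [0, (N−2s)/2) such that γ_α = λ. -/
/-
With `p = (N + 2s)/4`, `q = (N - 2s)/4` and `t = α/2`,
`γ_α = Λ_{N,s} · Γ(p+t) Γ(p-t) Γ(q)² / (Γ(q+t) Γ(q-t) Γ(p)²)`.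
By Euler's limit formula for `Γ` this ratio is the infinite product over `j ≥ 0` of
`((q+j)² - t²)(p+j)² / (((p+j)² - t²)(q+j)²)`, and since `q < p` every factor decreases in `t`
on `[0, q)`. Hence `γ` decreases strictly from `γ_0 = Λ_{N,s}` on `[0, (N-2s)/2)`. Since `1/Γ` is
continuous with `1/Γ(0) = 0`, `γ` extends continuously by `0` to the right endpoint, and the
intermediate value theorem gives every value in `(0, Λ_{N,s}]` exactly once.
-/

open MeasureTheory Real

/-- The optimal fractional Hardy constant `Λ_{N,s}`. -/
noncomputable def LambdaNS (N : ℕ) (s : ℝ) : ℝ :=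
  2 ^ (2 * s) * (Real.Gamma (((N : ℝ) + 2 * s) / 4)) ^ 2 /
    (Real.Gamma (((N : ℝ) - 2 * s) / 4)) ^ 2

/-- The spectral function `γ_α` associated to the fractional Hardy operator. -/
noncomputable def gammaB (N : ℕ) (s α : ℝ) : ℝ :=
  2 ^ (2 * s) * Real.Gamma (((N : ℝ) + 2 * s + 2 * α) / 4) *
      Real.Gamma (((N : ℝ) + 2 * s - 2 * α) / 4) /
    (Real.Gamma (((N : ℝ) - 2 * s + 2 * α) / 4) *
      Real.Gamma (((N : ℝ) - 2 * s - 2 * α) / 4))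

open Filter Topology Finset Set

theorem Real.continuous_inv_Gamma : Continuous fun x : ℝ => (Gamma x)⁻¹ := by
  have h : (fun x : ℝ => (Gamma x)⁻¹) = fun x : ℝ => ((Complex.Gamma x)⁻¹).re := by
    ext x
    rw [Complex.Gamma_ofReal, ← Complex.ofReal_inv, Complex.ofReal_re]
  rw [h]
  exact Complex.continuous_re.comp
    (Complex.differentiable_one_div_Gamma.continuous.comp Complex.continuous_ofReal)

theorem Real.tendsto_prod_div_Gamma {a b c d : ℝ} (ha : 0 < a) (hb : 0 < b) (hc : 0 < c)
    (hd : 0 < d) (habcd : a + b = c + d) :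
    Tendsto (fun n : ℕ => ∏ j ∈ range (n + 1), (c + j) * (d + j) / ((a + j) * (b + j)))
      atTop (𝓝 (Gamma a * Gamma b / (Gamma c * Gamma d))) := by
  have hΓ : Gamma c * Gamma d ≠ 0 := (mul_pos (Gamma_pos_of_pos hc) (Gamma_pos_of_pos hd)).ne'
  refine (((GammaSeq_tendsto_Gamma a).mul (GammaSeq_tendsto_Gamma b)).div
    ((GammaSeq_tendsto_Gamma c).mul (GammaSeq_tendsto_Gamma d)) hΓ).congr' ?_
  filter_upwards [eventually_gt_atTop 0] with n hn
  have hn : (0 : ℝ) < n := Nat.cast_pos.2 hn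
  have hprod : ∀ x : ℝ, 0 < x → 0 < ∏ j ∈ range (n + 1), (x + j) := fun x hx =>
    prod_pos fun j _ => by positivity
  have hpow : (n : ℝ) ^ a * (n : ℝ) ^ b = (n : ℝ) ^ c * (n : ℝ) ^ d := by
    rw [← rpow_add hn, ← rpow_add hn, habcd]
  have := hprod a ha
  have := hprod b hb
  have := hprod c hc
  have := hprod d hd
  simp only [Pi.div_apply, GammaSeq, prod_div_distrib, prod_mul_distrib]
  field_simp
  exact hpow

theorem add_pos_and_sub_pos_of_abs_lt {x t : ℝ} (h : |t| < x) : 0 < x + t ∧ 0 < x - t := by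
  obtain ⟨h₁, h₂⟩ := abs_lt.1 h
  constructor <;> linarith

theorem abs_lt_of_mem_Ico {t x : ℝ} (h : t ∈ Ico 0 x) : |t| < x :=
  (abs_of_nonneg h.1).trans_lt h.2

noncomputable def gammaRatio (p q t : ℝ) : ℝ :=
  Gamma (p + t) * Gamma (p - t) * Gamma q ^ 2 / (Gamma (q + t) * Gamma (q - t) * Gamma p ^ 2)

noncomputable def eulerFactor (p q t : ℝ) : ℝ :=
  (q + t) * (q - t) * p ^ 2 / ((p + t) * (p - t) * q ^ 2)

section GammaRatio

variable {p q t : ℝ}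

theorem gammaRatio_pos (htq : |t| < q) (htp : |t| < p) : 0 < gammaRatio p q t := by
  obtain ⟨hpt, hpt'⟩ := add_pos_and_sub_pos_of_abs_lt htp
  obtain ⟨hqt, hqt'⟩ := add_pos_and_sub_pos_of_abs_lt htq
  have hp : 0 < p := (abs_nonneg t).trans_lt htp
  have hq : 0 < q := (abs_nonneg t).trans_lt htq
  unfold gammaRatio
  positivity

theorem continuousOn_gammaRatio : ContinuousOn (gammaRatio p q) (Ioo (-p) p) := by
  have hΓ : ∀ x : ℝ, 0 < x → ContinuousAt Gamma x := fun x hx =>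
    differentiableOn_Gamma_Ioi.continuousOn.continuousAt (Ioi_mem_nhds hx)
  have h : gammaRatio p q = fun t => Gamma (p + t) * Gamma (p - t) * Gamma q ^ 2 *
      (Gamma (q + t))⁻¹ * (Gamma (q - t))⁻¹ * (Gamma p ^ 2)⁻¹ := by
    ext t
    simp only [gammaRatio, div_eq_mul_inv, mul_inv]
    ring
  intro t ⟨ht₁, ht₂⟩
  rw [h]
  refine ContinuousAt.continuousWithinAt ?_
  have h1 : ContinuousAt (fun t => Gamma (p + t)) t :=
    (hΓ _ (by linarith)).comp (continuous_const_add p).continuousAt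
  have h2 : ContinuousAt (fun t => Gamma (p - t)) t :=
    (hΓ _ (by linarith)).comp (continuous_sub_left p).continuousAt
  have h3 : ContinuousAt (fun t => (Gamma (q + t))⁻¹) t :=
    (continuous_inv_Gamma.comp (continuous_const_add q)).continuousAt
  have h4 : ContinuousAt (fun t => (Gamma (q - t))⁻¹) t :=
    (continuous_inv_Gamma.comp (continuous_sub_left q)).continuousAt
  exact ((((h1.mul h2).mul continuousAt_const).mul h3).mul h4).mul continuousAt_const

theorem tendsto_prod_eulerFactor (htq : |t| < q) (htp : |t| < p) :
    Tendsto (fun n : ℕ => ∏ j ∈ range (n + 1), eulerFactor (p + j) (q + j) t) atTop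
      (𝓝 (gammaRatio p q t)) := by
  obtain ⟨hpt, hpt'⟩ := add_pos_and_sub_pos_of_abs_lt htp
  obtain ⟨hqt, hqt'⟩ := add_pos_and_sub_pos_of_abs_lt htq
  have hp : 0 < p := (abs_nonneg t).trans_lt htp
  have hq : 0 < q := (abs_nonneg t).trans_lt htq
  have hpΓ := tendsto_prod_div_Gamma hpt hpt' hp hp (by ring)
  have hqΓ := tendsto_prod_div_Gamma hq hq hqt hqt' (by ring)
  convert hpΓ.mul hqΓ using 1
  · ext n
    rw [← prod_mul_distrib]
    refine prod_congr rfl fun j _ => ?_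
    rw [eulerFactor, div_mul_div_comm]
    congr 1 <;> ring
  · rw [gammaRatio, div_mul_div_comm]
    congr 2 <;> ring

theorem gammaRatio_eq_eulerFactor_mul (htq : |t| < q) (htp : |t| < p) :
    gammaRatio p q t = eulerFactor p q t * gammaRatio (p + 1) (q + 1) t := by
  obtain ⟨hpt, hpt'⟩ := add_pos_and_sub_pos_of_abs_lt htp
  obtain ⟨hqt, hqt'⟩ := add_pos_and_sub_pos_of_abs_lt htq
  have hp : 0 < p := (abs_nonneg t).trans_lt htp
  have hq : 0 < q := (abs_nonneg t).trans_lt htq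
  rw [gammaRatio, gammaRatio, eulerFactor, add_right_comm p, add_sub_right_comm p,
    add_right_comm q, add_sub_right_comm q, Gamma_add_one hp.ne', Gamma_add_one hq.ne',
    Gamma_add_one hpt.ne', Gamma_add_one hpt'.ne', Gamma_add_one hqt.ne', Gamma_add_one hqt'.ne']
  field_simp

theorem eulerFactor_pos (htq : |t| < q) (htp : |t| < p) : 0 < eulerFactor p q t := by
  obtain ⟨hpt, hpt'⟩ := add_pos_and_sub_pos_of_abs_lt htp
  obtain ⟨hqt, hqt'⟩ := add_pos_and_sub_pos_of_abs_lt htq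
  have hp : 0 < p := (abs_nonneg t).trans_lt htp
  have hq : 0 < q := (abs_nonneg t).trans_lt htq
  unfold eulerFactor
  positivity

theorem eulerFactor_sub_eulerFactor {a b : ℝ} (hq : q ≠ 0) (ha : |a| < p) (hb : |b| < p) :
    eulerFactor p q a - eulerFactor p q b =
      p ^ 2 * (p ^ 2 - q ^ 2) * (b ^ 2 - a ^ 2) / (q ^ 2 * (p ^ 2 - a ^ 2) * (p ^ 2 - b ^ 2)) := by
  obtain ⟨hpa, hpa'⟩ := add_pos_and_sub_pos_of_abs_lt ha
  obtain ⟨hpb, hpb'⟩ := add_pos_and_sub_pos_of_abs_lt hb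
  have : p ^ 2 - a ^ 2 ≠ 0 := by rw [sq_sub_sq]; positivity
  have : p ^ 2 - b ^ 2 ≠ 0 := by rw [sq_sub_sq]; positivity
  unfold eulerFactor
  field_simp
  ring

theorem strictAntiOn_eulerFactor (hqp : q < p) : StrictAntiOn (eulerFactor p q) (Ico 0 q) := by
  intro a ha b hb hab
  have hq : 0 < q := ha.1.trans_lt ha.2
  have hap : a < p := ha.2.trans hqp
  have hbp : b < p := hb.2.trans hqp
  rw [← sub_pos, eulerFactor_sub_eulerFactor hq.ne' ((abs_of_nonneg ha.1).trans_lt hap)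
    ((abs_of_nonneg hb.1).trans_lt hbp)]
  have : 0 < p ^ 2 - q ^ 2 := sub_pos.2 (pow_lt_pow_left₀ hqp hq.le two_ne_zero)
  have : 0 < b ^ 2 - a ^ 2 := sub_pos.2 (pow_lt_pow_left₀ hab ha.1 two_ne_zero)
  have : 0 < p ^ 2 - a ^ 2 := sub_pos.2 (pow_lt_pow_left₀ hap ha.1 two_ne_zero)
  have : 0 < p ^ 2 - b ^ 2 := sub_pos.2 (pow_lt_pow_left₀ hbp hb.1 two_ne_zero)
  have : 0 < p := hq.trans hqp
  positivity

theorem antitoneOn_gammaRatio (hqp : q < p) : AntitoneOn (gammaRatio p q) (Ico 0 q) := by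
  intro a ha b hb hab
  have ha' := abs_lt_of_mem_Ico ha
  have hb' := abs_lt_of_mem_Ico hb
  have hqj : ∀ j : ℕ, q ≤ q + j := fun j => le_add_of_nonneg_right j.cast_nonneg
  refine le_of_tendsto_of_tendsto' (tendsto_prod_eulerFactor hb' (hb'.trans hqp))
    (tendsto_prod_eulerFactor ha' (ha'.trans hqp)) fun n =>
      prod_le_prod (fun j _ => ?_) fun j _ => ?_
  · exact (eulerFactor_pos (hb'.trans_le (hqj j)) (by linarith [hqj j])).le
  · exact (strictAntiOn_eulerFactor (by linarith)).antitoneOn ⟨ha.1, ha.2.trans_le (hqj j)⟩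
      ⟨hb.1, hb.2.trans_le (hqj j)⟩ hab

-- `Γ (x + 1) = x Γ x` splits off the first Euler factor, the only one needed to decrease strictly.
theorem strictAntiOn_gammaRatio (hqp : q < p) : StrictAntiOn (gammaRatio p q) (Ico 0 q) := by
  intro a ha b hb hab
  have ha' := abs_lt_of_mem_Ico ha
  have hb' := abs_lt_of_mem_Ico hb
  have hshift := antitoneOn_gammaRatio (show q + 1 < p + 1 by linarith)
    ⟨ha.1, by linarith [ha.2]⟩ ⟨hb.1, by linarith [hb.2]⟩ hab.le
  rw [gammaRatio_eq_eulerFactor_mul ha' (ha'.trans hqp),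
    gammaRatio_eq_eulerFactor_mul hb' (hb'.trans hqp)]
  exact mul_lt_mul (strictAntiOn_eulerFactor hqp ha hb hab) hshift
    (gammaRatio_pos (by linarith) (by linarith)) (eulerFactor_pos ha' (ha'.trans hqp)).le

end GammaRatio

theorem existsUnique_eq_of_strictAntiOn_Ico {f : ℝ → ℝ} {a c l : ℝ} (hac : a ≤ c)
    (hf : StrictAntiOn f (Ico a c)) (hcont : ContinuousOn f (Icc a c)) (hl : l ∈ Ioc (f c) (f a)) :
    ∃! x, x ∈ Ico a c ∧ f x = l := by
  obtain ⟨x, hx, rfl⟩ := intermediate_value_Icc' hac hcont (Ioc_subset_Icc_self hl)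
  have hx' : x ∈ Ico a c := ⟨hx.1, hx.2.lt_of_ne (by rintro rfl; exact hl.1.ne rfl)⟩
  exact ⟨x, ⟨hx', rfl⟩, fun y ⟨hy, hyx⟩ => hf.injOn hy hx' hyx⟩

theorem gammaB_zero (N : ℕ) (s : ℝ) : gammaB N s 0 = LambdaNS N s := by
  simp only [gammaB, LambdaNS, mul_zero, add_zero, sub_zero]
  ring

-- Mathlib's convention `Γ 0 = 0` gives the true limit here: `1 / Γ` is entire and vanishes at `0`.
theorem gammaB_endpoint_eq_zero (N : ℕ) (s : ℝ) : gammaB N s (((N : ℝ) - 2 * s) / 2) = 0 := by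
  rw [gammaB, show ((N : ℝ) - 2 * s - 2 * (((N : ℝ) - 2 * s) / 2)) / 4 = 0 by ring, Gamma_zero,
    mul_zero, div_zero]

section SpectralParameter

variable {N : ℕ} {s : ℝ}

theorem LambdaNS_pos (hs : 0 < s) (hsN : 2 * s < N) : 0 < LambdaNS N s := by
  have : 0 < ((N : ℝ) + 2 * s) / 4 := by linarith
  have : 0 < ((N : ℝ) - 2 * s) / 4 := by linarith
  unfold LambdaNS
  positivity

theorem gammaB_eq_LambdaNS_mul_gammaRatio (hs : 0 < s) (hsN : 2 * s < N) (α : ℝ) :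
    gammaB N s α =
      LambdaNS N s * gammaRatio (((N : ℝ) + 2 * s) / 4) (((N : ℝ) - 2 * s) / 4) (α / 2) := by
  have : 0 < ((N : ℝ) + 2 * s) / 4 := by linarith
  have : 0 < ((N : ℝ) - 2 * s) / 4 := by linarith
  rw [gammaB, LambdaNS, gammaRatio]
  field_simp
  ring_nf

theorem gammaB_pos (hs : 0 < s) (hsN : 2 * s < N) {α : ℝ}
    (hα : α ∈ Ico 0 (((N : ℝ) - 2 * s) / 2)) : 0 < gammaB N s α := by
  have hα' : |α / 2| < ((N : ℝ) - 2 * s) / 4 :=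
    abs_lt_of_mem_Ico ⟨by linarith [hα.1], by linarith [hα.2]⟩
  rw [gammaB_eq_LambdaNS_mul_gammaRatio hs hsN]
  exact mul_pos (LambdaNS_pos hs hsN) (gammaRatio_pos hα' (hα'.trans (by linarith)))

theorem strictAntiOn_gammaB (hs : 0 < s) (hsN : 2 * s < N) :
    StrictAntiOn (gammaB N s) (Ico 0 (((N : ℝ) - 2 * s) / 2)) := by
  intro a ha b hb hab
  rw [gammaB_eq_LambdaNS_mul_gammaRatio hs hsN, gammaB_eq_LambdaNS_mul_gammaRatio hs hsN]
  refine mul_lt_mul_of_pos_left ?_ (LambdaNS_pos hs hsN)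
  exact strictAntiOn_gammaRatio (by linarith) ⟨by linarith [ha.1], by linarith [ha.2]⟩
    ⟨by linarith [hb.1], by linarith [hb.2]⟩ (by linarith)

theorem continuousOn_gammaB (hs : 0 < s) (hsN : 2 * s < N) :
    ContinuousOn (gammaB N s) (Icc 0 (((N : ℝ) - 2 * s) / 2)) := by
  rw [funext (gammaB_eq_LambdaNS_mul_gammaRatio hs hsN)]
  exact continuousOn_const.mul (continuousOn_gammaRatio.comp (continuousOn_id.div_const 2)
    fun α hα => ⟨by linarith [hα.1], by linarith [hα.2]⟩)

end SpectralParameter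

theorem gamma_range_spectral_parameter_general (N : ℕ) (s : ℝ)
    (hs0 : 0 < s) (hsN : 2 * s < N) :
    (∀ α : ℝ, 0 ≤ α → α < ((N : ℝ) - 2 * s) / 2 →
      0 < gammaB N s α ∧ gammaB N s α ≤ LambdaNS N s) ∧
    gammaB N s 0 = LambdaNS N s ∧
    (∀ l : ℝ, 0 < l → l ≤ LambdaNS N s →
      ∃! α : ℝ, (0 ≤ α ∧ α < ((N : ℝ) - 2 * s) / 2) ∧ gammaB N s α = l) := by
  have hc : 0 < ((N : ℝ) - 2 * s) / 2 := by linarith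
  have hanti := strictAntiOn_gammaB hs0 hsN
  refine ⟨fun α hα0 hα => ⟨gammaB_pos hs0 hsN ⟨hα0, hα⟩, ?_⟩, gammaB_zero N s, fun l hl0 hlΛ => ?_⟩
  · rw [← gammaB_zero N s]
    exact hanti.antitoneOn (left_mem_Ico.2 hc) ⟨hα0, hα⟩ hα0
  · refine existsUnique_eq_of_strictAntiOn_Ico hc.le hanti (continuousOn_gammaB hs0 hsN) ?_
    rw [gammaB_endpoint_eq_zero, gammaB_zero]
    exact ⟨hl0, hlΛ⟩

/-- Range of the spectral parameter: `γ` maps `[0,(N-2s)/2)` onto `(0, Λ_{N,s}]`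
bijectively, with `γ_0 = Λ_{N,s}`. -/
theorem gamma_range_spectral_parameter (N : ℕ) (hN : 0 < N) (s : ℝ)
    (hs0 : 0 < s) (hs1 : s < 1) (hsN : 2 * s < N) :
    (∀ α : ℝ, 0 ≤ α → α < ((N : ℝ) - 2 * s) / 2 →
      0 < gammaB N s α ∧ gammaB N s α ≤ LambdaNS N s) ∧
    gammaB N s 0 = LambdaNS N s ∧
    (∀ l : ℝ, 0 < l → l ≤ LambdaNS N s →
      ∃! α : ℝ, (0 ≤ α ∧ α < ((N : ℝ) - 2 * s) / 2) ∧ gammaB N s α = l) :=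
  gamma_range_spectral_parameter_general N s hs0 hsN
end

section
/- (Algebraic inequality for truncated powers.) Let p and m be real numbers with 1 < p < 2, m > 0 and pm > 1. Then there exists a constant C = C(p,m) > 0 such that for all real numbers a, b ≥ 0 one has (a − b)(a^{pm−1} − b^{pm−1}) ≤ C |a^m − b^m|^p. -/
/-!
Both sides are homogeneous of degree `pm` in `(a, b)`, so for `0 ≤ b ≤ a`, `a > 0`, it suffices
to take `a = 1`, `b = t ∈ [0, 1]`. There Bernoulli's inequality bounds `1 - t^(pm-1)` above and
`1 - t^m` below by multiples of `1 - t`, so the left side is at most a multiple of `(1 - t)^2`, the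
right side at least a multiple of `(1 - t)^p`, and `(1 - t)^2 ≤ (1 - t)^p` because `p ≤ 2`.
-/

open Real

lemma one_sub_rpow_le_max_mul_one_sub {s t : ℝ} (ht0 : 0 ≤ t) (ht1 : t ≤ 1) :
    1 - t ^ s ≤ max s 1 * (1 - t) := by
  rcases le_total s 1 with hs | hs
  · rw [max_eq_right hs, one_mul]
    linarith [self_le_rpow_of_le_one ht0 ht1 hs]
  · have bernoulli := one_add_mul_self_le_rpow_one_add (s := t - 1) (by linarith) hs
    rw [add_sub_cancel] at bernoulli
    rw [max_eq_left hs]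
    linarith

lemma min_mul_one_sub_le_one_sub_rpow {s t : ℝ} (hs : 0 ≤ s) (ht0 : 0 ≤ t) (ht1 : t ≤ 1) :
    min s 1 * (1 - t) ≤ 1 - t ^ s := by
  rcases le_total s 1 with hs1 | hs1
  · have bernoulli := rpow_one_add_le_one_add_mul_self (s := t - 1) (by linarith) hs hs1
    rw [add_sub_cancel] at bernoulli
    rw [min_eq_left hs1]
    linarith
  · rw [min_eq_right hs1, one_mul]
    linarith [rpow_le_self_of_le_one ht0 ht1 hs1]

lemma one_sub_mul_one_sub_rpow_le {p m s t : ℝ} (hp0 : 0 < p) (hp2 : p ≤ 2) (hm : 0 < m)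
    (ht0 : 0 ≤ t) (ht1 : t ≤ 1) :
    (1 - t) * (1 - t ^ s) ≤ max s 1 / min m 1 ^ p * (1 - t ^ m) ^ p := by
  have hu0 : 0 ≤ 1 - t := by linarith
  have hmin : 0 < min m 1 := lt_min hm one_pos
  have square_le_rpow : (1 - t) ^ (2 : ℝ) ≤ (1 - t) ^ p :=
    rpow_le_rpow_of_exponent_ge' hu0 (by linarith) hp0.le hp2
  have lower : (min m 1 * (1 - t)) ^ p ≤ (1 - t ^ m) ^ p :=
    rpow_le_rpow (by positivity) (min_mul_one_sub_le_one_sub_rpow hm.le ht0 ht1) hp0.le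
  rw [mul_rpow hmin.le hu0] at lower
  calc (1 - t) * (1 - t ^ s)
      ≤ (1 - t) * (max s 1 * (1 - t)) := by
        gcongr; exact one_sub_rpow_le_max_mul_one_sub ht0 ht1
    _ = max s 1 * (1 - t) ^ (2 : ℝ) := by rw [rpow_two]; ring
    _ ≤ max s 1 * (1 - t) ^ p := by gcongr
    _ = max s 1 / min m 1 ^ p * (min m 1 ^ p * (1 - t) ^ p) := by
        field_simp
    _ ≤ max s 1 / min m 1 ^ p * (1 - t ^ m) ^ p := by gcongr

lemma sub_mul_rpow_sub_rpow_le_of_le {p m a b : ℝ} (hp0 : 0 < p) (hp2 : p ≤ 2) (hm : 0 < m)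
    (hb : 0 ≤ b) (hba : b ≤ a) :
    (a - b) * (a ^ (p * m - 1) - b ^ (p * m - 1)) ≤
      max (p * m - 1) 1 / min m 1 ^ p * |a ^ m - b ^ m| ^ p := by
  rcases (hb.trans hba).eq_or_lt with rfl | ha
  · rw [le_antisymm hba hb, sub_self, zero_mul]
    positivity
  set t := b / a
  have ht0 : 0 ≤ t := div_nonneg hb ha.le
  have hb_eq : b = a * t := (mul_div_cancel₀ b ha.ne').symm
  have hscale (s : ℝ) : a ^ s - b ^ s = a ^ s * (1 - t ^ s) := by
    rw [hb_eq, mul_rpow ha.le ht0]; ring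
  have hmt : 0 ≤ 1 - t ^ m := by
    have := rpow_le_one ht0 ((div_le_one ha).mpr hba) hm.le
    linarith
  have lhs : (a - b) * (a ^ (p * m - 1) - b ^ (p * m - 1))
      = a ^ (p * m) * ((1 - t) * (1 - t ^ (p * m - 1))) := by
    rw [hscale, hb_eq, rpow_sub_one ha.ne']; field_simp
  have rhs : |a ^ m - b ^ m| ^ p = a ^ (p * m) * (1 - t ^ m) ^ p := by
    rw [hscale, abs_of_nonneg (mul_nonneg (by positivity) hmt), mul_rpow (by positivity) hmt,
      ← rpow_mul ha.le, mul_comm m]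
  rw [lhs, rhs, mul_left_comm _ (a ^ (p * m))]
  exact mul_le_mul_of_nonneg_left
    (one_sub_mul_one_sub_rpow_le hp0 hp2 hm ht0 ((div_le_one ha).mpr hba)) (by positivity)

theorem algebraic_power_inequality_general (p m : ℝ) (hp1 : 1 < p) (hp2 : p < 2)
    (hm : 0 < m) :
    ∃ C : ℝ, 0 < C ∧ ∀ a b : ℝ, 0 ≤ a → 0 ≤ b →
      (a - b) * (a ^ (p * m - 1) - b ^ (p * m - 1)) ≤ C * |a ^ m - b ^ m| ^ p := by
  have hp0 : 0 < p := by linarith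
  refine ⟨max (p * m - 1) 1 / min m 1 ^ p,
    div_pos (lt_max_of_lt_right one_pos) (rpow_pos_of_pos (lt_min hm one_pos) p), ?_⟩
  intro a b ha hb
  rcases le_total b a with hba | hab
  · exact sub_mul_rpow_sub_rpow_le_of_le hp0 hp2.le hm hb hba
  · have := sub_mul_rpow_sub_rpow_le_of_le hp0 hp2.le hm ha hab
    rw [abs_sub_comm]
    linarith

/-- Algebraic inequality for truncated powers: for `1 < p < 2`, `m > 0`, `pm > 1`,
there is `C = C(p,m) > 0` with `(a-b)(a^{pm-1} - b^{pm-1}) ≤ C |a^m - b^m|^p`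
for all `a, b ≥ 0`. -/
theorem algebraic_power_inequality (p m : ℝ) (hp1 : 1 < p) (hp2 : p < 2)
    (hm : 0 < m) (hpm : 1 < p * m) :
    ∃ C : ℝ, 0 < C ∧ ∀ a b : ℝ, 0 ≤ a → 0 ≤ b →
      (a - b) * (a ^ (p * m - 1) - b ^ (p * m - 1)) ≤ C * |a ^ m - b ^ m| ^ p :=
  algebraic_power_inequality_general p m hp1 hp2 hm
end

section
/- (Power difference inequality.) There exists a constant C > 0 such that for all real numbers a, b ≥ 0 one has (a² − b²)(a − b) ≤ C (a^{3/2} − b^{3/2})². -/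
/-- Power difference inequality: there is `C > 0` with
`(a² − b²)(a − b) ≤ C (a^{3/2} − b^{3/2})²` for all `a, b ≥ 0`. -/
theorem power_difference_inequality :
    ∃ C : ℝ, 0 < C ∧ ∀ a b : ℝ, 0 ≤ a → 0 ≤ b →
      (a ^ 2 - b ^ 2) * (a - b) ≤ C * (a ^ (3 / 2 : ℝ) - b ^ (3 / 2 : ℝ)) ^ 2 := by
  refine ⟨2, two_pos, fun a b ha hb => ?_⟩
  set x := Real.sqrt a with hxdef
  set y := Real.sqrt b with hydef
  have hx : 0 ≤ x := Real.sqrt_nonneg a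
  have hy : 0 ≤ y := Real.sqrt_nonneg b
  have hax : a = x ^ 2 := (Real.sq_sqrt ha).symm
  have hbx : b = y ^ 2 := (Real.sq_sqrt hb).symm
  have h1 : a ^ (3 / 2 : ℝ) = x ^ 3 := by
    rw [hax, ← Real.rpow_natCast x 2, ← Real.rpow_mul hx,
      show (((2:ℕ):ℝ)*(3/2)) = ((3:ℕ):ℝ) by norm_num, Real.rpow_natCast]
  have h2 : b ^ (3 / 2 : ℝ) = y ^ 3 := by
    rw [hbx, ← Real.rpow_natCast y 2, ← Real.rpow_mul hy,
      show (((2:ℕ):ℝ)*(3/2)) = ((3:ℕ):ℝ) by norm_num, Real.rpow_natCast]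
  rw [h1, h2, hax, hbx]
  nlinarith [sq_nonneg (x - y), sq_nonneg (x + y), mul_nonneg hx hy,
    sq_nonneg (x*y*(x-y)), sq_nonneg (x^2 - y^2), mul_nonneg (mul_nonneg hx hy) (sq_nonneg (x-y)),
    sq_nonneg (x^2 + y^2 - x*y)]
end
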